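/- (Summary-closure characterization of Dyck reachability) Let G = (V,E) be a Σ_k-labeled graph. Define E* ⊆ V × V as the least binary relation such that: (i) if (u,v,ε) ∈ E then (u,v) ∈ E*; and (ii) for every 1 ≤ i ≤ k, if (x,u,α_i) ∈ E, (v,y,ᾱ_i) ∈ E, and (u,v) is in the reflexive-transitive closure of E*, then (x,y) ∈ E*. Then for all nodes x, y ∈ V: y is Dyck-reachable from x in G if and only if (x,y) is in the reflexive-transitive closure of E*. -/
import Mathlib


/-- The Dyck alphabet `Σ_k`: `k` opening symbols `α_i` and `k` closing symbols `ᾱ_i`. -/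
inductive DSym (k : ℕ) : Type
  | op (i : Fin k)
  | cl (i : Fin k)

/-- The Dyck language `𝓛_k`: the least set of words containing the empty word, closed
under concatenation and under wrapping with a matched pair of parentheses. -/
inductive Dyck {k : ℕ} : List (DSym k) → Prop
  | nil : Dyck []
  | concat {w₁ w₂ : List (DSym k)} : Dyck w₁ → Dyck w₂ → Dyck (w₁ ++ w₂)
  | wrap {w : List (DSym k)} (i : Fin k) : Dyck w → Dyck (DSym.op i :: (w ++ [DSym.cl i]))

/-- `PathLabel E u v w` : there is a path from `u` to `v` in the `Σ_k`-labeled graph with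
edge relation `E` (labels in `Σ_k ∪ {ε}`, with `ε = none`), whose label (ε contributing
the empty word) is `w`. -/
inductive PathLabel {V : Type} {k : ℕ} (E : V → V → Option (DSym k) → Prop) :
    V → V → List (DSym k) → Prop
  | refl (u : V) : PathLabel E u u []
  | step {u v w : V} {l : Option (DSym k)} {s : List (DSym k)} :
      E u v l → PathLabel E v w s → PathLabel E u w (l.toList ++ s)

/-- `v` is Dyck-reachable from `u`. -/
def DyckReach {V : Type} {k : ℕ} (E : V → V → Option (DSym k) → Prop) (u v : V) : Prop :=
  ∃ w, PathLabel E u v w ∧ Dyck w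

/-- A `Σ_k`-labeled graph is bidirected if ε-edges come in symmetric pairs and each
`α_i`-labeled edge is matched by a reverse `ᾱ_i`-labeled edge. -/
def Bidirected {V : Type} {k : ℕ} (E : V → V → Option (DSym k) → Prop) : Prop :=
  (∀ u v, E u v none ↔ E v u none) ∧
  (∀ u v (i : Fin k), E u v (some (DSym.op i)) ↔ E v u (some (DSym.cl i)))


mutual
  /-- The summary-edge relation `E*`: the least relation containing all ε-edges and,
  whenever `(x,u,α_i) ∈ E`, `(v,y,ᾱ_i) ∈ E` and `(u,v)` is in the reflexive-transitive
  closure of `E*`, also containing `(x,y)`. -/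
  inductive SummaryEdge {V : Type} {k : ℕ} (E : V → V → Option (DSym k) → Prop) :
      V → V → Prop
    | eps {u v : V} : E u v none → SummaryEdge E u v
    | summary {x y u v : V} (i : Fin k) :
        E x u (some (DSym.op i)) → E v y (some (DSym.cl i)) →
        SummaryRTC E u v → SummaryEdge E x y

  /-- The reflexive-transitive closure of the summary-edge relation `E*`. -/
  inductive SummaryRTC {V : Type} {k : ℕ} (E : V → V → Option (DSym k) → Prop) :
      V → V → Prop
    | refl (u : V) : SummaryRTC E u u
    | head {u v w : V} : SummaryEdge E u v → SummaryRTC E v w → SummaryRTC E u w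
end

section Aux
variable {V : Type} {k : ℕ} {E : V → V → Option (DSym k) → Prop}

theorem pathAppend {x y z : V} {s t : List (DSym k)} (h : PathLabel E x y s)
    (h' : PathLabel E y z t) : PathLabel E x z (s ++ t) := by
  induction h with
  | refl => simpa
  | step e _ ih => rw [List.append_assoc]; exact .step e (ih h')

theorem rtcTrans {x y z : V} (h : SummaryRTC E x y) (h' : SummaryRTC E y z) :
    SummaryRTC E x z := by
  refine SummaryRTC.rec (motive_1 := fun a b _ => SummaryEdge E a b)
    (motive_2 := fun a b _ => ∀ c, SummaryRTC E b c → SummaryRTC E a c) ?_ ?_ ?_ ?_ h z h'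
  · intro u v e; exact .eps e
  · intro x y u v i h1 h2 hr _; exact .summary i h1 h2 hr
  · intro u c hc; exact hc
  · intro u v w _ _ ihe ih c hc; exact .head ihe (ih c hc)

theorem rtcSingle {x y : V} (h : SummaryEdge E x y) : SummaryRTC E x y :=
  .head h (.refl y)

/-- Splitting a path at a word boundary. -/
theorem pathSplit {x y : V} {w : List (DSym k)} (h : PathLabel E x y w) :
    ∀ s t, w = s ++ t → ∃ z, PathLabel E x z s ∧ PathLabel E z y t := by
  induction h with
  | refl u =>
    intro s t hst
    rcases List.append_eq_nil_iff.mp hst.symm with ⟨rfl, rfl⟩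
    exact ⟨u, .refl u, .refl u⟩
  | @step u v w l sl e hp ih =>
    intro s t hst
    cases s with
    | nil =>
      simp only [List.nil_append] at hst
      exact ⟨u, .refl u, hst ▸ PathLabel.step e hp⟩
    | cons a s' =>
      cases l with
      | none =>
        simp at hst
        obtain ⟨z, hz1, hz2⟩ := ih (a :: s') t hst
        refine ⟨z, ?_, hz2⟩
        have := PathLabel.step e hz1
        simpa using this
      | some σ =>
        simp at hst
        obtain ⟨rfl, hst⟩ := hst
        obtain ⟨z, hz1, hz2⟩ := ih s' t hst
        refine ⟨z, ?_, hz2⟩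
        have := PathLabel.step e hz1
        simpa using this

/-- An ε-labeled path yields a summary closure path. -/
theorem nilPathRTC {x y : V} {w : List (DSym k)} (h : PathLabel E x y w) (hw : w = []) :
    SummaryRTC E x y := by
  induction h with
  | refl u => exact .refl u
  | @step u v w l s e hp ih =>
    cases l with
    | none => exact .head (.eps e) (ih (by simpa using hw))
    | some σ => simp at hw

/-- A path labeled by a single symbol decomposes around the edge bearing that symbol. -/
theorem singlePath {σ : DSym k} {x y : V} {w : List (DSym k)} (h : PathLabel E x y w)
    (hw : w = [σ]) : ∃ a b, SummaryRTC E x a ∧ E a b (some σ) ∧ SummaryRTC E b y := by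
  induction h with
  | refl u => simp at hw
  | @step u v w l s e hp ih =>
    cases l with
    | none =>
      obtain ⟨a, b, h1, h2, h3⟩ := ih (by simpa using hw)
      exact ⟨a, b, .head (.eps e) h1, h2, h3⟩
    | some τ =>
      simp at hw
      obtain ⟨rfl, rfl⟩ := hw
      exact ⟨u, v, .refl u, e, nilPathRTC hp rfl⟩

theorem dyckPathRTC {w : List (DSym k)} (hd : Dyck w) :
    ∀ x y : V, PathLabel E x y w → SummaryRTC E x y := by
  induction hd with
  | nil => exact fun x y h => nilPathRTC h rfl
  | @concat w₁ w₂ _ _ ih1 ih2 =>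
    intro x y h
    obtain ⟨z, h1, h2⟩ := pathSplit h w₁ w₂ rfl
    exact rtcTrans (ih1 _ _ h1) (ih2 _ _ h2)
  | @wrap w i _ ih =>
    intro x y h
    obtain ⟨z₁, h1, h2⟩ := pathSplit h [DSym.op i] (w ++ [DSym.cl i]) rfl
    obtain ⟨z₂, h3, h4⟩ := pathSplit h2 w [DSym.cl i] rfl
    obtain ⟨a, b, ha1, ha2, ha3⟩ := singlePath h1 rfl
    obtain ⟨c, d, hc1, hc2, hc3⟩ := singlePath h4 rfl
    have hmid : SummaryRTC E b c := rtcTrans ha3 (rtcTrans (ih _ _ h3) hc1)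
    exact rtcTrans ha1 (.head (.summary i ha2 hc2 hmid) hc3)

theorem rtcReach {u v : V} (h : SummaryRTC E u v) : DyckReach E u v := by
  refine SummaryRTC.rec (motive_1 := fun a b _ => DyckReach E a b)
    (motive_2 := fun a b _ => DyckReach E a b) ?_ ?_ ?_ ?_ h
  · intro u v e
    exact ⟨[], by simpa using PathLabel.step e (.refl v), .nil⟩
  · intro x y a b i h1 h2 _ ih
    obtain ⟨w, hp, hd⟩ := ih
    refine ⟨DSym.op i :: (w ++ [DSym.cl i]), ?_, .wrap i hd⟩
    have h3 : PathLabel E b y [DSym.cl i] := by simpa using PathLabel.step h2 (.refl y)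
    have h4 : PathLabel E a y (w ++ [DSym.cl i]) := pathAppend hp h3
    simpa using PathLabel.step h1 h4
  · intro u; exact ⟨[], .refl u, .nil⟩
  · intro u v w _ _ ih1 ih2
    obtain ⟨w₁, hp1, hd1⟩ := ih1
    obtain ⟨w₂, hp2, hd2⟩ := ih2
    exact ⟨w₁ ++ w₂, pathAppend hp1 hp2, .concat hd1 hd2⟩

end Aux

/-- Summary-closure characterization of Dyck reachability: `y` is Dyck-reachable from
`x` iff `(x,y)` is in the reflexive-transitive closure of the summary relation `E*`. -/
theorem dyckReach_iff_summaryClosure {V : Type} {k : ℕ} (hk : 1 ≤ k)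
    (E : V → V → Option (DSym k) → Prop) (x y : V) :
    DyckReach E x y ↔ SummaryRTC E x y := by
  constructor
  · rintro ⟨w, hp, hd⟩
    exact dyckPathRTC hd x y hp
  · exact rtcReach
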